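/- Let λ = (i, 1, 1, ..., 1) be a partition of n with first part i, and let z ∈ S_n be an element such that for any simple reflection s, sz < z iff s = s_i and zs < z iff s = s_i. Then there exists j with 0 ≤ j ≤ i - 1 such that z = (s_i s_{i-1} ⋯ s_{i-j})(s_{i+1} s_i ⋯ s_{i-j+1}) ⋯ (s_{i+j} s_{i+j-1} ⋯ s_i), and this expression is reduced, so l(z) = (j+1)^2. -/

import Mathlib

/-- `⟨i mod n⟩` as an element of `Fin n`. -/
def finOf (n : ℕ) [NeZero n] (i : ℕ) : Fin n := ⟨i % n, Nat.mod_lt _ (NeZero.pos n)⟩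

/-- The simple reflection `s_j = (j, j+1)` of the symmetric group `S_n`
(1-indexed, `j = 1, …, n-1`), written 0-indexed as the swap of `j-1` and `j`. -/
def sNp (n : ℕ) [NeZero n] (j : ℕ) : Equiv.Perm (Fin n) :=
  Equiv.swap (finOf n (j - 1)) (finOf n j)

/-- The Coxeter length function on `S_n` with respect to the simple reflections
`s_1, …, s_{n-1}`: the minimal length of an expression of `w` as a product of
adjacent transpositions. -/
noncomputable def lenS (n : ℕ) [NeZero n] (w : Equiv.Perm (Fin n)) : ℕ :=
  sInf {m | ∃ l : List ℕ, (∀ j ∈ l, 1 ≤ j ∧ j ≤ n - 1) ∧ l.length = m ∧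
    (l.map (sNp n)).prod = w}

/-!
View `z` as the permutation of `ℕ` that fixes every `k ≥ n`. The Coxeter length is the number
of inversions, so `s_c` is a right (left) descent of `z` exactly when `z` (resp. `z⁻¹`)
decreases from `c - 1` to `c`. Hence `z` and `z⁻¹` are increasing on `[0, i)` and on `[i, n)`.
Playing the two against each other, a point below `i` is either fixed or sent to `[i, n)`, the
moved ones form a segment `[a, i)`, and monotonicity pins `z` down to the order-preserving
exchange of the blocks `[a, i)` and `[i, 2i - a)`. The given word, a product of `j + 1 = i - a`
runs each carrying one point of the left block across the right one, evaluates to this block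
exchange, which has exactly `(j + 1)^2` inversions.
-/

open Equiv Finset

lemma add_sub_le_of_lt_succ {f : ℕ → ℕ} {lo hi : ℕ} (h : ∀ k, lo ≤ k → k < hi → f k < f (k + 1))
    {k l : ℕ} (hk : lo ≤ k) (hkl : k ≤ l) (hl : l ≤ hi) : f k + (l - k) ≤ f l := by
  induction l, hkl using Nat.le_induction with
  | base => simp
  | succ l hkl ih =>
    have := h l (by omega) (by omega)
    have := ih (by omega)
    omega

def blockSwap (a p q : ℕ) : Perm ℕ where
  toFun k := if a ≤ k ∧ k < a + p then k + q else if a + p ≤ k ∧ k < a + p + q then k - p else k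
  invFun k := if a ≤ k ∧ k < a + q then k + p else if a + q ≤ k ∧ k < a + q + p then k - q else k
  left_inv k := by dsimp only; split_ifs <;> omega
  right_inv k := by dsimp only; split_ifs <;> omega

lemma blockSwap_apply (a p q k : ℕ) : blockSwap a p q k =
    if a ≤ k ∧ k < a + p then k + q else if a + p ≤ k ∧ k < a + p + q then k - p else k :=
  rfl

lemma blockSwap_zero_left (a q : ℕ) : blockSwap a 0 q = 1 := by
  ext k; simp only [blockSwap_apply, Perm.one_apply]; split_ifs <;> omega

lemma blockSwap_zero_right (a p : ℕ) : blockSwap a p 0 = 1 := by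
  ext k; simp only [blockSwap_apply, Perm.one_apply]; split_ifs <;> omega

lemma swap_add_one_eq_blockSwap (c : ℕ) : swap c (c + 1) = blockSwap c 1 1 := by
  ext k; simp only [swap_apply_def, blockSwap_apply]; split_ifs <;> omega

lemma blockSwap_mul_blockSwap_add {a p p' q : ℕ} :
    blockSwap a p q * blockSwap (a + p) p' q = blockSwap a (p + p') q := by
  ext k; simp only [Perm.mul_apply, blockSwap_apply]; split_ifs <;> omega

lemma blockSwap_add_mul_blockSwap {a p q q' : ℕ} :
    blockSwap (a + q') p q * blockSwap a p q' = blockSwap a p (q' + q) := by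
  ext k; simp only [Perm.mul_apply, blockSwap_apply]; split_ifs <;> omega

def toPermNat (n : ℕ) : Perm (Fin n) →* Perm ℕ := Perm.extendDomainHom Fin.equivSubtype

lemma toPermNat_apply_of_lt {n k : ℕ} (w : Perm (Fin n)) (hk : k < n) :
    toPermNat n w k = w ⟨k, hk⟩ :=
  Perm.extendDomain_apply_subtype w Fin.equivSubtype hk

lemma toPermNat_apply_of_le {n k : ℕ} (w : Perm (Fin n)) (hk : n ≤ k) :
    toPermNat n w k = k :=
  Perm.extendDomain_apply_not_subtype _ _ (not_lt.2 hk)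

lemma toPermNat_apply_lt {n k : ℕ} (w : Perm (Fin n)) (hk : k < n) : toPermNat n w k < n := by
  simp [toPermNat_apply_of_lt w hk]

lemma toPermNat_injective (n : ℕ) : Function.Injective (toPermNat n) :=
  Perm.extendDomainHom_injective _

lemma toPermNat_sNp {n c : ℕ} [NeZero n] (hc : 1 ≤ c) (hcn : c < n) :
    toPermNat n (sNp n c) = swap (c - 1) c := by
  ext k
  rcases lt_or_ge k n with hk | hk
  · rw [toPermNat_apply_of_lt _ hk, sNp, swap_apply_def, swap_apply_def]
    simp only [Fin.ext_iff, finOf, Nat.mod_eq_of_lt hcn,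
      Nat.mod_eq_of_lt (show c - 1 < n by omega)]
    split_ifs <;> simp
  · rw [toPermNat_apply_of_le _ hk, swap_apply_of_ne_of_ne (by omega) (by omega)]
lemma eq_one_of_toPermNat_lt_succ {n : ℕ} {w : Perm (Fin n)}
    (h : ∀ k, k + 1 < n → toPermNat n w k < toPermNat n w (k + 1)) : w = 1 := by
  apply toPermNat_injective n
  ext k
  rw [map_one, Perm.one_apply]
  rcases lt_or_ge k n with hk | hk
  · have hlow := add_sub_le_of_lt_succ (lo := 0) (hi := n - 1) (fun k _ hk => h k (by omega))
      le_rfl (Nat.zero_le k) (by omega)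
    have hup := add_sub_le_of_lt_succ (lo := 0) (hi := n - 1) (fun k _ hk => h k (by omega))
      (Nat.zero_le k) (Nat.le_sub_one_of_lt hk) le_rfl
    have := toPermNat_apply_lt w (show n - 1 < n by omega)
    omega
  · exact toPermNat_apply_of_le w hk

def inversions (n : ℕ) (f : Perm ℕ) : Finset (ℕ × ℕ) :=
  (range n ×ˢ range n).filter fun p => p.1 < p.2 ∧ f p.2 < f p.1

lemma mem_inversions {n : ℕ} {f : Perm ℕ} {p : ℕ × ℕ} :
    p ∈ inversions n f ↔ p.1 < n ∧ p.2 < n ∧ p.1 < p.2 ∧ f p.2 < f p.1 := by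
  simp [inversions, and_assoc]

lemma inversions_one (n : ℕ) : inversions n 1 = ∅ := by
  ext p
  simp only [mem_inversions, Perm.one_apply, notMem_empty, iff_false]
  omega

section Swap

variable {n c : ℕ} {f : Perm ℕ}

lemma swap_mem_erase_inversions_mul_swap (hc : c + 1 < n) {p : ℕ × ℕ}
    (hp : p ∈ (inversions n f).erase (c, c + 1)) :
    (swap c (c + 1) p.1, swap c (c + 1) p.2) ∈
      (inversions n (f * swap c (c + 1))).erase (c, c + 1) := by
  obtain ⟨x, y⟩ := p
  simp only [mem_erase, mem_inversions, Perm.mul_apply, swap_apply_self, ne_eq, Prod.mk.injEq]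
    at hp ⊢
  refine ⟨?_, ?_, ?_, ?_, hp.2.2.2.2⟩ <;> simp only [swap_apply_def] <;> split_ifs <;> omega

lemma card_inversions_mul_swap_of_lt (hc : c + 1 < n) (h : f c < f (c + 1)) :
    #(inversions n (f * swap c (c + 1))) = #(inversions n f) + 1 := by
  have hmem : (c, c + 1) ∈ inversions n (f * swap c (c + 1)) := by
    simp only [mem_inversions, Perm.mul_apply, swap_apply_left, swap_apply_right]
    exact ⟨by omega, hc, by omega, h⟩
  have hnotMem : (c, c + 1) ∉ inversions n f := by simp [mem_inversions, h.le]
  have hcard : #((inversions n (f * swap c (c + 1))).erase (c, c + 1)) =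
      #((inversions n f).erase (c, c + 1)) := by
    refine card_nbij' (fun p => (swap c (c + 1) p.1, swap c (c + 1) p.2))
      (fun p => (swap c (c + 1) p.1, swap c (c + 1) p.2)) (fun p hp => ?_)
      (fun p hp => swap_mem_erase_inversions_mul_swap hc hp) (fun p _ => by simp)
      (fun p _ => by simp)
    have := swap_mem_erase_inversions_mul_swap (f := f * swap c (c + 1)) hc hp
    rwa [mul_swap_mul_self] at this
  rw [← card_erase_add_one hmem, hcard, erase_eq_of_notMem hnotMem]

lemma card_inversions_mul_swap_add_one_of_lt (hc : c + 1 < n) (h : f (c + 1) < f c) :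
    #(inversions n (f * swap c (c + 1))) + 1 = #(inversions n f) := by
  simpa [mul_swap_mul_self] using
    (card_inversions_mul_swap_of_lt (f := f * swap c (c + 1)) hc (by simpa using h)).symm

lemma card_inversions_mul_swap_lt_iff (hc : c + 1 < n) :
    #(inversions n (f * swap c (c + 1))) < #(inversions n f) ↔ f (c + 1) < f c := by
  rcases lt_or_gt_of_ne (f.injective.ne (show c ≠ c + 1 by omega)) with h | h
  · rw [card_inversions_mul_swap_of_lt hc h]; omega
  · have := card_inversions_mul_swap_add_one_of_lt hc h; omega

lemma card_inversions_mul_swap_le (hc : c + 1 < n) :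
    #(inversions n (f * swap c (c + 1))) ≤ #(inversions n f) + 1 := by
  rcases lt_or_gt_of_ne (f.injective.ne (show c ≠ c + 1 by omega)) with h | h
  · rw [card_inversions_mul_swap_of_lt hc h]
  · have := card_inversions_mul_swap_add_one_of_lt hc h; omega

end Swap

lemma card_inversions_blockSwap {n a p q : ℕ} (h : a + p + q ≤ n) :
    #(inversions n (blockSwap a p q)) = p * q := by
  have : inversions n (blockSwap a p q) = Ico a (a + p) ×ˢ Ico (a + p) (a + p + q) := by
    ext ⟨x, y⟩
    simp only [mem_inversions, mem_product, mem_Ico, blockSwap_apply]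
    split_ifs <;> omega
  simp [this]

section Length

variable {n : ℕ} [NeZero n]

lemma sNp_inv (c : ℕ) : (sNp n c)⁻¹ = sNp n c := swap_inv _ _

lemma sNp_mul_self (c : ℕ) : sNp n c * sNp n c = 1 := swap_mul_self _ _

lemma toPermNat_sNp_add_one {c : ℕ} (hc : c + 1 < n) :
    toPermNat n (sNp n (c + 1)) = swap c (c + 1) := by
  simpa using toPermNat_sNp (n := n) (c := c + 1) (by omega) hc

lemma exists_word_length_eq_card_inversions (w : Perm (Fin n)) :
    ∃ l : List ℕ, (∀ c ∈ l, 1 ≤ c ∧ c ≤ n - 1) ∧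
      l.length = #(inversions n (toPermNat n w)) ∧ (l.map (sNp n)).prod = w := by
  induction hm : #(inversions n (toPermNat n w)) using Nat.strong_induction_on generalizing w with
  | _ m ih =>
  by_cases hdesc : ∃ c, c + 1 < n ∧ toPermNat n w (c + 1) < toPermNat n w c
  · obtain ⟨c, hc, hlt⟩ := hdesc
    have hcount := card_inversions_mul_swap_add_one_of_lt hc hlt
    rw [← toPermNat_sNp_add_one hc, ← map_mul, hm] at hcount
    obtain ⟨l, hl, hlen, hprod⟩ := ih _ (by omega) (w * sNp n (c + 1)) rfl
    refine ⟨l ++ [c + 1], ?_, by simp [hlen, ← hcount], by simp [hprod, mul_assoc, sNp_mul_self]⟩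
    simp only [List.mem_append, List.mem_singleton]
    rintro d (hd | rfl)
    exacts [hl d hd, ⟨by omega, by omega⟩]
  · simp only [not_exists, not_and, not_lt] at hdesc
    have hw : w = 1 := eq_one_of_toPermNat_lt_succ fun k hk =>
      (hdesc k hk).lt_of_ne ((toPermNat n w).injective.ne (show k ≠ k + 1 by omega))
    subst hw
    exact ⟨[], by simp, by simp [← hm, inversions_one], by simp⟩

lemma card_inversions_le_length (l : List ℕ) (hl : ∀ c ∈ l, 1 ≤ c ∧ c ≤ n - 1) :
    #(inversions n (toPermNat n (l.map (sNp n)).prod)) ≤ l.length := by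
  induction l using List.reverseRecOn with
  | nil => simp [inversions_one]
  | append_singleton l c ih =>
    have hc := hl c (by simp)
    obtain ⟨d, rfl⟩ : ∃ d, c = d + 1 := ⟨c - 1, by omega⟩
    have := card_inversions_mul_swap_le (f := toPermNat n (l.map (sNp n)).prod)
      (show d + 1 < n by omega)
    rw [List.map_append, List.prod_append, map_mul, List.map_singleton, List.prod_singleton,
      toPermNat_sNp_add_one (by omega), List.length_append, List.length_singleton]
    have := ih fun c hc => hl c (by simp [hc])
    omega

lemma lenS_le_length {w : Perm (Fin n)} {l : List ℕ} (hl : ∀ c ∈ l, 1 ≤ c ∧ c ≤ n - 1)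
    (hw : (l.map (sNp n)).prod = w) : lenS n w ≤ l.length :=
  Nat.sInf_le ⟨l, hl, rfl, hw⟩

lemma exists_word_length_eq_lenS (w : Perm (Fin n)) :
    ∃ l : List ℕ, (∀ c ∈ l, 1 ≤ c ∧ c ≤ n - 1) ∧ l.length = lenS n w ∧
      (l.map (sNp n)).prod = w := by
  obtain ⟨l, hl, -, hw⟩ := exists_word_length_eq_card_inversions w
  exact Nat.sInf_mem (s := {m | ∃ l : List ℕ, (∀ j ∈ l, 1 ≤ j ∧ j ≤ n - 1) ∧ l.length = m ∧
    (l.map (sNp n)).prod = w}) ⟨_, l, hl, rfl, hw⟩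

theorem lenS_eq_card_inversions (w : Perm (Fin n)) :
    lenS n w = #(inversions n (toPermNat n w)) := by
  obtain ⟨l, hl, hlen, hw⟩ := exists_word_length_eq_card_inversions w
  obtain ⟨l', hl', hlen', hw'⟩ := exists_word_length_eq_lenS w
  have := card_inversions_le_length l' hl'
  rw [hw'] at this
  exact le_antisymm (hlen ▸ lenS_le_length hl hw) (hlen' ▸ this)

lemma lenS_inv_le (w : Perm (Fin n)) : lenS n w⁻¹ ≤ lenS n w := by
  obtain ⟨l, hl, hlen, hw⟩ := exists_word_length_eq_lenS w
  rw [← hlen, ← List.length_reverse]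
  refine lenS_le_length (by simpa using hl) ?_
  rw [← hw, List.prod_inv_reverse, List.map_reverse, List.map_map]
  simp [Function.comp_def, sNp_inv]

theorem lenS_inv (w : Perm (Fin n)) : lenS n w⁻¹ = lenS n w :=
  le_antisymm (lenS_inv_le w) (by simpa using lenS_inv_le w⁻¹)

theorem lenS_mul_sNp_lt_iff (w : Perm (Fin n)) {c : ℕ} (hc : 1 ≤ c) (hcn : c < n) :
    lenS n (w * sNp n c) < lenS n w ↔ toPermNat n w c < toPermNat n w (c - 1) := by
  obtain ⟨d, rfl⟩ : ∃ d, c = d + 1 := ⟨c - 1, by omega⟩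
  rw [lenS_eq_card_inversions, lenS_eq_card_inversions, map_mul, toPermNat_sNp_add_one hcn,
    Nat.add_sub_cancel]
  exact card_inversions_mul_swap_lt_iff hcn

theorem lenS_sNp_mul_lt_iff (w : Perm (Fin n)) {c : ℕ} (hc : 1 ≤ c) (hcn : c < n) :
    lenS n (sNp n c * w) < lenS n w ↔ (toPermNat n w)⁻¹ c < (toPermNat n w)⁻¹ (c - 1) := by
  rw [← lenS_inv (sNp n c * w), ← lenS_inv w, mul_inv_rev, sNp_inv, ← map_inv]
  exact lenS_mul_sNp_lt_iff w⁻¹ hc hcn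

end Length

lemma toPermNat_prod_sNp_sub {n b len : ℕ} [NeZero n] (hlen : len ≤ b) (hb : b < n) :
    toPermNat n ((List.range len).map fun r => sNp n (b - r)).prod = blockSwap (b - len) 1 len := by
  induction len with
  | zero => simp [blockSwap_zero_right]
  | succ len ih =>
    obtain ⟨c, hc⟩ : ∃ c, b - len = c + 1 := ⟨b - len - 1, by omega⟩
    rw [List.range_succ, List.map_append, List.prod_append, map_mul, ih (by omega),
      List.map_singleton, List.prod_singleton, toPermNat_sNp (by omega) (by omega), hc,
      Nat.add_sub_cancel, swap_add_one_eq_blockSwap, blockSwap_add_mul_blockSwap,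
      show b - (len + 1) = c by omega, add_comm]

lemma toPermNat_prod_runs {n i j m : ℕ} [NeZero n] (hj : j + 1 ≤ i) (hm : i + m ≤ n) :
    toPermNat n ((List.range m).map fun t =>
      ((List.range (j + 1)).map fun r => sNp n (i + t - r)).prod).prod =
      blockSwap (i - (j + 1)) m (j + 1) := by
  induction m with
  | zero => simp [blockSwap_zero_left]
  | succ m ih =>
    rw [List.range_succ (n := m), List.map_append, List.prod_append, map_mul, ih (by omega),
      List.map_singleton, List.prod_singleton, toPermNat_prod_sNp_sub (by omega) (by omega),
      show i + m - (j + 1) = i - (j + 1) + m by omega, blockSwap_mul_blockSwap_add]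

lemma toPermNat_word {n i j : ℕ} [NeZero n] (hj : j + 1 ≤ i) (hn : i + j < n) :
    toPermNat n ((((List.range (j + 1)).map fun t =>
      (List.range (j + 1)).map fun r => i + t - r).flatten.map (sNp n)).prod) =
      blockSwap (i - (j + 1)) (j + 1) (j + 1) := by
  simp only [List.map_flatten, List.prod_flatten, List.map_map, Function.comp_def]
  exact toPermNat_prod_runs hj (by omega)

/-- `f (k + 1) < f k` says that `s_{k+1}` is a right descent of the permutation that `f` extends
(see `lenS_mul_sNp_lt_iff`); the condition on `f⁻¹` describes its left descents. -/
structure IsBigrassmannianAt (n i : ℕ) (f : Perm ℕ) : Prop where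
  apply_of_le : ∀ k, n ≤ k → f k = k
  descent_iff : ∀ k, k + 1 < n → (f (k + 1) < f k ↔ k + 1 = i)
  inv_descent_iff : ∀ k, k + 1 < n → (f⁻¹ (k + 1) < f⁻¹ k ↔ k + 1 = i)

namespace IsBigrassmannianAt

variable {n i k l : ℕ} {f : Perm ℕ}

lemma inv (h : IsBigrassmannianAt n i f) : IsBigrassmannianAt n i f⁻¹ where
  apply_of_le k hk := by rw [Perm.inv_eq_iff_eq, h.apply_of_le k hk]
  descent_iff := h.inv_descent_iff
  inv_descent_iff := by simpa using h.descent_iff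

lemma apply_lt (h : IsBigrassmannianAt n i f) (hk : k < n) : f k < n := by
  by_contra! hfk
  have := f.injective (h.apply_of_le _ hfk)
  omega

lemma lt_apply_succ (h : IsBigrassmannianAt n i f) (hk : k + 1 < n) (hki : k + 1 ≠ i) :
    f k < f (k + 1) :=
  (not_lt.1 fun hlt => hki ((h.descent_iff k hk).1 hlt)).lt_of_ne
    (f.injective.ne (by omega))

lemma add_sub_le (h : IsBigrassmannianAt n i f) (hkl : k ≤ l) (hl : l < n)
    (hseg : l < i ∨ i ≤ k) : f k + (l - k) ≤ f l := by
  rcases hseg with hli | hik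
  · exact add_sub_le_of_lt_succ (lo := 0) (hi := l)
      (fun m _ hm => h.lt_apply_succ (k := m) (by omega) (by omega)) (Nat.zero_le k) hkl le_rfl
  · exact add_sub_le_of_lt_succ (lo := k) (hi := l)
      (fun m hm hml => h.lt_apply_succ (k := m) (by omega) (by omega)) le_rfl hkl le_rfl

lemma le_apply (h : IsBigrassmannianAt n i f) (hki : k < i) (hkn : k < n) : k ≤ f k := by
  have := h.add_sub_le (Nat.zero_le k) hkn (Or.inl hki)
  omega

lemma apply_le (h : IsBigrassmannianAt n i f) (hik : i ≤ k) (hkn : k < n) : f k ≤ k := by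
  have := h.add_sub_le (l := n - 1) (by omega) (by omega) (Or.inr hik)
  have := h.apply_lt (show n - 1 < n by omega)
  omega

lemma apply_eq_of_lt_of_lt (h : IsBigrassmannianAt n i f) (hki : k < i) (hkn : k < n)
    (hfk : f k < i) : f k = k := by
  have := h.inv.le_apply hfk (h.apply_lt hkn)
  have := h.le_apply hki hkn
  simp only [Perm.coe_inv, symm_apply_apply] at *
  omega

lemma apply_eq_of_le_of_le (h : IsBigrassmannianAt n i f) (hik : i ≤ k) (hfk : i ≤ f k) :
    f k = k := by
  rcases lt_or_ge k n with hkn | hkn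
  · have := h.inv.apply_le hfk (h.apply_lt hkn)
    have := h.apply_le hik hkn
    simp only [Perm.coe_inv, symm_apply_apply] at *
    omega
  · exact h.apply_of_le k hkn

lemma exists_apply_eq_add (h : IsBigrassmannianAt n i f) (hi : 1 ≤ i) (hin : i < n) :
    ∃ a < i, (∀ k < a, f k = k) ∧ ∀ k, a ≤ k → k < i → f k = k + (i - a) := by
  classical
  have hex : ∃ k, i ≤ f k := ⟨f⁻¹ i, by simp⟩
  set a := Nat.find hex
  have hfa : i ≤ f a := Nat.find_spec hex
  have hbelow : ∀ k < a, f k < i := fun k hk => not_le.1 (Nat.find_min hex hk)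
  have hai : a < i := by
    by_contra! hia
    have hfix : ∀ k < i, f k = k := fun k hk =>
      h.apply_eq_of_lt_of_lt hk (by omega) (hbelow k (by omega))
    have hdesc := (h.descent_iff (i - 1) (by omega)).2 (by omega)
    rw [Nat.sub_add_cancel hi, hfix (i - 1) (by omega)] at hdesc
    have := f.injective (hfix (f i) (by omega))
    omega
  refine ⟨a, hai, fun k hk => h.apply_eq_of_lt_of_lt (by omega) (by omega) (hbelow k hk),
    fun k hak hki => le_antisymm ?_ ?_⟩
  · have hki' := h.add_sub_le (k := k) (l := i - 1) (by omega) (by omega) (Or.inl (by omega))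
    have hai' := h.add_sub_le (k := a) (l := i - 1) (by omega) (by omega) (Or.inl (by omega))
    -- `f⁻¹` increases on `[i, f (i - 1)]` from `f⁻¹ i ≥ a` up to `i - 1`.
    have hgi : a ≤ f⁻¹ i := Nat.find_min' hex (by simp)
    have hg := h.inv.add_sub_le (k := i) (l := f (i - 1)) (by omega) (h.apply_lt (by omega))
      (Or.inr le_rfl)
    simp only [Perm.coe_inv, symm_apply_apply] at hg hgi
    omega
  · have := h.add_sub_le hak (by omega) (Or.inl hki)
    omega

lemma eq_blockSwap {a : ℕ} (h : IsBigrassmannianAt n i f) (hai : a < i) (hin : i < n)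
    (hpre : ∀ k < a, f k = k) (hmid : ∀ k, a ≤ k → k < i → f k = k + (i - a)) :
    f = blockSwap a (i - a) (i - a) := by
  have hend : 2 * i - a ≤ n := by
    have := h.apply_lt (k := i - 1) (by omega)
    rw [hmid (i - 1) (by omega) (by omega)] at this
    omega
  have hge : ∀ k, i ≤ k → a ≤ f k := fun k hik => by
    by_contra! hka
    have := f.injective (hpre _ hka)
    omega
  -- the values in `[i, 2 * i - a)` are already taken on `[a, i)`
  have hlt : ∀ k, i ≤ k → k < 2 * i - a → f k < i := fun k hik hk => by
    by_contra! hfk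
    have hfix := h.apply_eq_of_le_of_le hik hfk
    have := hmid (k - (i - a)) (by omega) (by omega)
    rw [show k - (i - a) + (i - a) = k by omega, ← hfix] at this
    have := f.injective this
    omega
  ext k
  rw [blockSwap_apply]
  split_ifs with h₁ h₂
  · exact hmid k h₁.1 (by omega)
  · have hlow := h.add_sub_le (k := i) (l := k) (by omega) (by omega) (Or.inr le_rfl)
    have hup := h.add_sub_le (k := k) (l := 2 * i - a - 1) (by omega) (by omega) (by omega)
    have := hge i le_rfl
    have := hlt (2 * i - a - 1) (by omega) (by omega)
    omega
  · rcases lt_or_ge k a with hka | hka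
    · exact hpre k hka
    rcases lt_or_ge k n with hkn | hkn
    · have := h.add_sub_le (k := i) (l := k) (by omega) hkn (Or.inr le_rfl)
      have := hge i le_rfl
      exact h.apply_eq_of_le_of_le (by omega) (by omega)
    · exact h.apply_of_le k hkn

theorem exists_eq_blockSwap (h : IsBigrassmannianAt n i f) (hi : 1 ≤ i) (hin : i < n) :
    ∃ j, j + 1 ≤ i ∧ i + j < n ∧ f = blockSwap (i - (j + 1)) (j + 1) (j + 1) := by
  obtain ⟨a, hai, hpre, hmid⟩ := h.exists_apply_eq_add hi hin
  have hend := h.apply_lt (k := i - 1) (by omega)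
  rw [hmid (i - 1) (by omega) (by omega)] at hend
  refine ⟨i - a - 1, by omega, by omega, ?_⟩
  rw [show i - a - 1 + 1 = i - a by omega, show i - (i - a) = a by omega]
  exact h.eq_blockSwap hai hin hpre hmid

end IsBigrassmannianAt

/-- Let `λ = (i, 1, …, 1)` be a partition of `n` with first part `i`, and let
`z ∈ S_n` be such that for every simple reflection `s`, `sz < z` iff `s = s_i`
and `zs < z` iff `s = s_i` (i.e. both descent sets of `z` equal `{s_i}`). Then
there is `0 ≤ j ≤ i - 1` with
`z = (s_i s_{i-1} ⋯ s_{i-j})(s_{i+1} s_i ⋯ s_{i-j+1}) ⋯ (s_{i+j} s_{i+j-1} ⋯ s_i)`,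
a reduced expression, so `l(z) = (j+1)^2`. -/
theorem descent_singleton_form (n : ℕ) [NeZero n] (i : ℕ)
    (hi1 : 1 ≤ i) (hi2 : i ≤ n - 1) (z : Equiv.Perm (Fin n))
    (hleft : ∀ j : ℕ, 1 ≤ j → j ≤ n - 1 →
      (lenS n (sNp n j * z) < lenS n z ↔ j = i))
    (hright : ∀ j : ℕ, 1 ≤ j → j ≤ n - 1 →
      (lenS n (z * sNp n j) < lenS n z ↔ j = i)) :
    ∃ j : ℕ, j ≤ i - 1 ∧
      z = ((((List.range (j + 1)).map (fun t =>
              (List.range (j + 1)).map (fun r => i + t - r))).flatten.map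
            (sNp n)).prod) ∧
      lenS n z = (j + 1) ^ 2 := by
  have hz : IsBigrassmannianAt n i (toPermNat n z) :=
    { apply_of_le := fun k => toPermNat_apply_of_le z
      descent_iff := fun k hk => by
        simpa using (lenS_mul_sNp_lt_iff z (c := k + 1) (by omega) hk).symm.trans
          (hright (k + 1) (by omega) (by omega))
      inv_descent_iff := fun k hk => by
        simpa using (lenS_sNp_mul_lt_iff z (c := k + 1) (by omega) hk).symm.trans
          (hleft (k + 1) (by omega) (by omega)) }
  obtain ⟨j, hji, hjn, hblock⟩ := hz.exists_eq_blockSwap hi1 (by omega)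
  refine ⟨j, by omega, toPermNat_injective n ?_, ?_⟩
  · rw [hblock, toPermNat_word hji hjn]
  · rw [lenS_eq_card_inversions, hblock, card_inversions_blockSwap (by omega), sq]
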